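/- (Hadamard row-spreading bound) Let HD be a Randomized Hadamard Transform on ℝ^n (H scaled Walsh–Hadamard, D random diagonal Rademacher), and U ∈ ℝ^{n×d} an (α, β, 2)-conditioned matrix. Then for any constant c > 1, with probability at least 1 − 1/c, every row of HDU satisfies ‖(HDU)_i‖₂ ≤ (1 + √(8 log(cn))) · α/√n. -/

import Mathlib

open scoped BigOperators Matrix Classical

/-- Euclidean norm of a vector in `ℝ^n`. -/
noncomputable def enorm {n : ℕ} (v : Fin n → ℝ) : ℝ := Real.sqrt (∑ i, (v i) ^ 2)

/-- Frobenius norm of a matrix. -/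
noncomputable def fnorm {n d : ℕ} (M : Matrix (Fin n) (Fin d) ℝ) : ℝ :=
  Real.sqrt (∑ i, ∑ j, (M i j) ^ 2)

/-- The `±1` vector associated with a boolean sign pattern. -/
def signVec {n : ℕ} (s : Fin n → Bool) : Fin n → ℝ := fun i => if s i then 1 else -1

/-- The (unscaled) Walsh–Hadamard matrix `H_{2^s}`, defined recursively by the
block structure `H_{2k} = [[H_k, H_k], [H_k, −H_k]]` (with `H_1 = [1]`, so that
`H_2 = [[1,1],[1,−1]]`). -/
noncomputable def Had : (s : ℕ) → Matrix (Fin (2 ^ s)) (Fin (2 ^ s)) ℝ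
  | 0 => fun _ _ => 1
  | s + 1 => fun i j =>
      (if 2 ^ s ≤ i.val ∧ 2 ^ s ≤ j.val then -1 else 1) *
        Had s ⟨i.val % 2 ^ s, Nat.mod_lt _ (Nat.two_pow_pos s)⟩
              ⟨j.val % 2 ^ s, Nat.mod_lt _ (Nat.two_pow_pos s)⟩

/-!
Since `H` has `±1` entries, the entry `(i, k)` of `HDU` is `n^{-1/2}` times the Rademacher sum
`∑ₜ Hᵢₜ Uₜₖ εₜ`, whose coefficient vector has the norm of the `k`-th column of `U`. Hoeffding's
bound puts the probability that it exceeds `θ` times that norm below `2 exp(-θ²/2) ≤ 1/(c n²)` for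
`θ = 1 + √(8 log (c n))`. The `β`-condition makes `U` injective, so `d ≤ n`, and a union bound over
the at most `n²` entries shows that with probability at least `1 - 1/c` all entries are controlled;
summing over `k` then gives `‖(HDU)ᵢ‖ ≤ θ ‖U‖_F / √n ≤ θ α / √n`.
-/

open Finset Real

lemma enorm_nonneg {n : ℕ} (v : Fin n → ℝ) : 0 ≤ _root_.enorm v := sqrt_nonneg _

lemma enorm_sq {n : ℕ} (v : Fin n → ℝ) : _root_.enorm v ^ 2 = ∑ i, v i ^ 2 :=
  sq_sqrt (sum_nonneg fun _ _ => sq_nonneg _)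

lemma eq_zero_of_enorm_eq_zero {n : ℕ} {v : Fin n → ℝ} (h : _root_.enorm v = 0) : v = 0 := by
  have hsum : ∑ i, v i ^ 2 = 0 := by rw [← enorm_sq, h, sq, zero_mul]
  funext i
  exact pow_eq_zero_iff two_ne_zero |>.1 <|
    (sum_eq_zero_iff_of_nonneg fun i _ => sq_nonneg (v i)).1 hsum i (mem_univ i)

lemma enorm_const_smul {n : ℕ} (r : ℝ) (v : Fin n → ℝ) :
    _root_.enorm (r • v) = |r| * _root_.enorm v := by
  simp only [_root_.enorm, Pi.smul_apply, smul_eq_mul, mul_pow, ← mul_sum]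
  rw [sqrt_mul (sq_nonneg r), sqrt_sq_eq_abs]

lemma enorm_le_enorm_of_abs_le {n : ℕ} {v w : Fin n → ℝ} (h : ∀ i, |v i| ≤ |w i|) :
    _root_.enorm v ≤ _root_.enorm w :=
  sqrt_le_sqrt (sum_le_sum fun i _ => sq_le_sq.2 (h i))

lemma enorm_enorm_col {m d : ℕ} (U : Matrix (Fin m) (Fin d) ℝ) :
    _root_.enorm (fun k => _root_.enorm (fun t => U t k)) = fnorm U := by
  simp only [_root_.enorm, fnorm, sq_sqrt (sum_nonneg fun _ _ => sq_nonneg _)]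
  rw [sum_comm]

lemma enorm_le_mul_fnorm_of_abs_le {m d : ℕ} {U : Matrix (Fin m) (Fin d) ℝ} {v : Fin d → ℝ}
    {θ : ℝ} (hθ : 0 ≤ θ) (h : ∀ k, |v k| ≤ θ * _root_.enorm (fun t => U t k)) :
    _root_.enorm v ≤ θ * fnorm U := by
  calc _root_.enorm v ≤ _root_.enorm (θ • fun k => _root_.enorm (fun t => U t k)) :=
        enorm_le_enorm_of_abs_le fun k => (h k).trans (le_abs_self _)
    _ = θ * fnorm U := by rw [enorm_const_smul, abs_of_nonneg hθ, enorm_enorm_col]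

lemma le_of_forall_enorm_le_mul_enorm_mulVec {m d : ℕ} (U : Matrix (Fin m) (Fin d) ℝ) {β : ℝ}
    (hβ : ∀ x : Fin d → ℝ, _root_.enorm x ≤ β * _root_.enorm (U *ᵥ x)) : d ≤ m := by
  have hinj : Function.Injective U.mulVecLin := by
    rw [← LinearMap.ker_eq_bot, LinearMap.ker_eq_bot']
    intro x hx
    have hUx : _root_.enorm (U *ᵥ x) = 0 := by
      rw [show U *ᵥ x = 0 from hx]; simp [_root_.enorm]
    exact eq_zero_of_enorm_eq_zero <|
      le_antisymm (by simpa [hUx] using hβ x) (enorm_nonneg x)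
  simpa using LinearMap.finrank_le_finrank_of_injective hinj

section Rademacher

variable {n : ℕ}

noncomputable def rademacherSum (a : Fin n → ℝ) (sg : Fin n → Bool) : ℝ :=
  ∑ t, a t * signVec sg t

lemma signVec_sq (sg : Fin n → Bool) (t : Fin n) : signVec sg t ^ 2 = 1 := by
  unfold signVec; split_ifs <;> norm_num

lemma rademacherSum_smul (h : ℝ) (a : Fin n → ℝ) (sg : Fin n → Bool) :
    rademacherSum (h • a) sg = h * rademacherSum a sg := by
  simp only [rademacherSum, Pi.smul_apply, smul_eq_mul, mul_sum, mul_assoc]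

lemma rademacherSum_neg (a : Fin n → ℝ) (sg : Fin n → Bool) :
    rademacherSum (-a) sg = -rademacherSum a sg := by
  simp only [rademacherSum, Pi.neg_apply, neg_mul, sum_neg_distrib]

lemma sum_exp_rademacherSum (a : Fin n → ℝ) :
    ∑ sg, exp (rademacherSum a sg) = ∏ t, 2 * cosh (a t) := by
  simp only [rademacherSum, signVec, exp_sum]
  rw [← Fintype.prod_sum fun t (b : Bool) => exp (a t * if b then 1 else -1)]
  refine prod_congr rfl fun t _ => ?_
  simp [cosh_eq]
  ring

lemma sum_exp_rademacherSum_le (a : Fin n → ℝ) :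
    ∑ sg, exp (rademacherSum a sg) ≤ 2 ^ n * exp (_root_.enorm a ^ 2 / 2) := by
  calc ∑ sg, exp (rademacherSum a sg) = ∏ t, 2 * cosh (a t) := sum_exp_rademacherSum a
    _ ≤ ∏ t, 2 * exp (a t ^ 2 / 2) := prod_le_prod (fun t _ => by positivity) fun t _ =>
        mul_le_mul_of_nonneg_left (cosh_le_exp_half_sq _) zero_le_two
    _ = 2 ^ n * exp (_root_.enorm a ^ 2 / 2) := by
        rw [prod_mul_distrib, prod_const, card_univ, Fintype.card_fin, ← exp_sum, enorm_sq,
          sum_div]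

lemma card_le_rademacherSum_le (a : Fin n → ℝ) (lam : ℝ) :
    (#{sg | lam ≤ rademacherSum a sg} : ℝ) ≤ 2 ^ n * exp (_root_.enorm a ^ 2 / 2 - lam) := by
  rw [exp_sub, mul_div_assoc', le_div_iff₀ (exp_pos _)]
  calc (#{sg | lam ≤ rademacherSum a sg} : ℝ) * exp lam
      ≤ ∑ sg ∈ {sg | lam ≤ rademacherSum a sg}, exp (rademacherSum a sg) := by
        rw [← nsmul_eq_mul]
        exact card_nsmul_le_sum _ _ _ fun sg hsg => exp_le_exp.2 (mem_filter.1 hsg).2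
    _ ≤ ∑ sg, exp (rademacherSum a sg) :=
        sum_le_sum_of_subset_of_nonneg (subset_univ _) fun _ _ _ => (exp_pos _).le
    _ ≤ 2 ^ n * exp (_root_.enorm a ^ 2 / 2) := sum_exp_rademacherSum_le a

lemma card_lt_rademacherSum_le (a : Fin n → ℝ) {θ : ℝ} (hθ : 0 ≤ θ) :
    (#{sg | θ * _root_.enorm a < rademacherSum a sg} : ℝ) ≤ 2 ^ n * exp (-(θ ^ 2) / 2) := by
  rcases (enorm_nonneg a).eq_or_lt with ha | ha
  · have : #{sg | θ * _root_.enorm a < rademacherSum a sg} = 0 := by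
      simp [eq_zero_of_enorm_eq_zero ha.symm, rademacherSum, _root_.enorm]
    rw [this, Nat.cast_zero]
    positivity
  · -- Chernoff's bound for `h • a` with the optimal `h = θ / ‖a‖`.
    set h := θ / _root_.enorm a
    have hh : h * _root_.enorm a = θ := div_mul_cancel₀ θ ha.ne'
    have hsub : ({sg | θ * _root_.enorm a < rademacherSum a sg} : Finset _)
        ⊆ ({sg | θ ^ 2 ≤ rademacherSum (h • a) sg} : Finset _) := by
      intro sg hsg
      rw [mem_filter] at hsg ⊢
      refine ⟨mem_univ _, ?_⟩
      calc θ ^ 2 = h * (θ * _root_.enorm a) := by rw [← hh]; ring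
        _ ≤ rademacherSum (h • a) sg := by
          rw [rademacherSum_smul]
          exact mul_le_mul_of_nonneg_left hsg.2.le (div_nonneg hθ ha.le)
    calc (#{sg | θ * _root_.enorm a < rademacherSum a sg} : ℝ)
        ≤ #{sg | θ ^ 2 ≤ rademacherSum (h • a) sg} := by exact_mod_cast card_le_card hsub
      _ ≤ 2 ^ n * exp (_root_.enorm (h • a) ^ 2 / 2 - θ ^ 2) := card_le_rademacherSum_le _ _
      _ = 2 ^ n * exp (-(θ ^ 2) / 2) := by
        rw [enorm_const_smul, abs_of_nonneg (div_nonneg hθ ha.le), hh]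
        ring_nf

lemma card_lt_abs_rademacherSum_le (a : Fin n → ℝ) {θ : ℝ} (hθ : 0 ≤ θ) :
    (#{sg | θ * _root_.enorm a < |rademacherSum a sg|} : ℝ)
      ≤ 2 * 2 ^ n * exp (-(θ ^ 2) / 2) := by
  have hneg : _root_.enorm (-a) = _root_.enorm a := by simp [_root_.enorm]
  have hsub : ({sg | θ * _root_.enorm a < |rademacherSum a sg|} : Finset _)
      ⊆ ({sg | θ * _root_.enorm a < rademacherSum a sg} : Finset _)
        ∪ ({sg | θ * _root_.enorm (-a) < rademacherSum (-a) sg} : Finset _) := by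
    intro sg hsg
    rw [mem_filter, lt_abs] at hsg
    rw [mem_union, mem_filter, mem_filter, hneg, rademacherSum_neg]
    exact hsg.2.imp (⟨mem_univ _, ·⟩) (⟨mem_univ _, ·⟩)
  calc (#{sg | θ * _root_.enorm a < |rademacherSum a sg|} : ℝ)
      ≤ #{sg | θ * _root_.enorm a < rademacherSum a sg}
        + #{sg | θ * _root_.enorm (-a) < rademacherSum (-a) sg} := by
        exact_mod_cast (card_le_card hsub).trans (card_union_le _ _)
    _ ≤ 2 ^ n * exp (-(θ ^ 2) / 2) + 2 ^ n * exp (-(θ ^ 2) / 2) :=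
        add_le_add (card_lt_rademacherSum_le a hθ) (card_lt_rademacherSum_le (-a) hθ)
    _ = 2 * 2 ^ n * exp (-(θ ^ 2) / 2) := by ring

lemma abs_rademacherSum_le (a : Fin n → ℝ) (sg : Fin n → Bool) :
    |rademacherSum a sg| ≤ √n * _root_.enorm a := by
  refine abs_le_of_sq_le_sq ?_ (mul_nonneg (sqrt_nonneg _) (enorm_nonneg a))
  calc rademacherSum a sg ^ 2 ≤ (∑ t, a t ^ 2) * ∑ t, signVec sg t ^ 2 :=
        sum_mul_sq_le_sq_mul_sq _ _ _
    _ = (√n * _root_.enorm a) ^ 2 := by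
        simp only [signVec_sq, sum_const, card_univ, Fintype.card_fin, nsmul_eq_mul, mul_one,
          mul_pow, sq_sqrt (Nat.cast_nonneg n), enorm_sq]
        ring

/-- For `n = 1` Hoeffding's bound is too weak, but there the tail is empty by Cauchy–Schwarz. -/
lemma card_lt_abs_rademacherSum_le_div (hn : 0 < n) (a : Fin n → ℝ) {c θ : ℝ} (hc : 1 < c)
    (hθ : 1 ≤ θ) (hθc : 8 * log (c * n) ≤ θ ^ 2) :
    (#{sg | θ * _root_.enorm a < |rademacherSum a sg|} : ℝ) ≤ 2 ^ n / (c * n ^ 2) := by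
  obtain rfl | hn2 := (Nat.one_le_iff_ne_zero.2 hn.ne').eq_or_lt
  · have : #{sg | θ * _root_.enorm a < |rademacherSum a sg|} = 0 := by
      refine card_eq_zero.2 (filter_eq_empty_iff.2 fun sg _ => not_lt.2 ?_)
      calc |rademacherSum a sg| ≤ √(1 : ℕ) * _root_.enorm a := abs_rademacherSum_le a sg
        _ ≤ θ * _root_.enorm a := by
          rw [Nat.cast_one, sqrt_one]; exact mul_le_mul_of_nonneg_right hθ (enorm_nonneg a)
    rw [this, Nat.cast_zero]
    positivity
  · have hn2' : (2 : ℝ) ≤ n := by exact_mod_cast hn2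
    have htail : exp (-(θ ^ 2) / 2) ≤ ((c * n) ^ 4)⁻¹ := by
      rw [← exp_log (by positivity : (0 : ℝ) < ((c * n) ^ 4)⁻¹), log_inv, log_pow]
      exact exp_le_exp.2 (by push_cast; linarith)
    have hc3 : 1 ≤ c ^ 3 := one_le_pow₀ hc.le
    calc (#{sg | θ * _root_.enorm a < |rademacherSum a sg|} : ℝ)
        ≤ 2 * 2 ^ n * exp (-(θ ^ 2) / 2) := card_lt_abs_rademacherSum_le a (by linarith)
      _ ≤ 2 * 2 ^ n * ((c * n) ^ 4)⁻¹ := by gcongr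
      _ ≤ 2 ^ n / (c * n ^ 2) := by
        rw [← div_eq_mul_inv, div_le_div_iff₀ (by positivity) (by positivity)]
        have : 2 ≤ c ^ 3 * n ^ 2 := by nlinarith
        calc 2 * 2 ^ n * (c * n ^ 2) = 2 ^ n * (c * n ^ 2) * 2 := by ring
          _ ≤ 2 ^ n * (c * n ^ 2) * (c ^ 3 * n ^ 2) := by gcongr
          _ = 2 ^ n * (c * n) ^ 4 := by ring

end Rademacher

lemma Had_sq (s : ℕ) (i j : Fin (2 ^ s)) : Had s i j ^ 2 = 1 := by
  induction s with
  | zero => simp [Had]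
  | succ s ih => simp only [Had, mul_pow, ih, mul_one]; split_ifs <;> norm_num

lemma enorm_Had_mul (s : ℕ) (i : Fin (2 ^ s)) (v : Fin (2 ^ s) → ℝ) :
    _root_.enorm (fun t => Had s i t * v t) = _root_.enorm v := by
  simp only [_root_.enorm, mul_pow, Had_sq, one_mul]

lemma enorm_row_smul_mul_signVec_mul {m d : ℕ} (r : ℝ) (H : Matrix (Fin m) (Fin m) ℝ)
    (U : Matrix (Fin m) (Fin d) ℝ) (sg : Fin m → Bool) (i : Fin m) :
    _root_.enorm (fun k => ∑ t, (r • H) i t * signVec sg t * U t k)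
      = |r| * _root_.enorm (fun k => rademacherSum (fun t => H i t * U t k) sg) := by
  rw [← enorm_const_smul]
  congr 1
  funext k
  simp only [rademacherSum, Pi.smul_apply, Matrix.smul_apply, smul_eq_mul, mul_sum]
  exact sum_congr rfl fun t _ => by ring

lemma enorm_Had_row_le {s d : ℕ} {U : Matrix (Fin (2 ^ s)) (Fin d) ℝ} {sg : Fin (2 ^ s) → Bool}
    {i : Fin (2 ^ s)} {θ : ℝ} (hθ : 0 ≤ θ)
    (h : ∀ k, |rademacherSum (fun t => Had s i t * U t k) sg|
      ≤ θ * _root_.enorm (fun t => Had s i t * U t k)) :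
    _root_.enorm (fun k => ∑ t, ((√(2 ^ s))⁻¹ • Had s) i t * signVec sg t * U t k)
      ≤ θ * fnorm U / √(2 ^ s) := by
  rw [enorm_row_smul_mul_signVec_mul, abs_inv, abs_of_nonneg (sqrt_nonneg _), inv_mul_eq_div]
  gcongr
  exact enorm_le_mul_fnorm_of_abs_le hθ fun k => by simpa only [enorm_Had_mul] using h k

lemma card_filter_not_forall_le_sum {α ι : Type*} [Fintype α] [Fintype ι] (P : ι → α → Prop)
    [∀ j, DecidablePred (P j)] [DecidablePred fun x => ∀ j, P j x] :
    #{x | ¬∀ j, P j x} ≤ ∑ j, #{x | ¬P j x} :=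
  calc #{x | ¬∀ j, P j x} ≤ #(univ.biUnion fun j => ({x | ¬P j x} : Finset α)) :=
        card_le_card fun x => by simp [not_forall]
    _ ≤ ∑ j, #{x | ¬P j x} := card_biUnion_le

lemma one_sub_le_card_filter_div {α : Type*} [Fintype α] [Nonempty α] {p q : α → Prop}
    [DecidablePred p] [DecidablePred q] {δ : ℝ}
    (hpq : ∀ x, p x → q x) (hbad : (#{x | ¬p x} : ℝ) ≤ δ * Fintype.card α) :
    1 - δ ≤ #{x | q x} / Fintype.card α := by
  have hsplit : (#{x | p x} : ℝ) + #{x | ¬p x} = Fintype.card α := by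
    exact_mod_cast card_filter_add_card_filter_not (s := univ) p
  have hpq' : (#{x | p x} : ℝ) ≤ #{x | q x} := by
    exact_mod_cast card_le_card (monotone_filter_right _ fun x _ => hpq x)
  rw [le_div_iff₀ (by exact_mod_cast Fintype.card_pos)]
  linarith

/-- Hadamard row-spreading bound: let `n = 2^s`, let `HD` be a
Randomized Hadamard Transform (`H` the scaled Walsh–Hadamard matrix, `D` a
uniformly random diagonal `±1` matrix), and let `U ∈ ℝ^{n×d}` be
`(α,β,2)`-conditioned.  Then for any `c > 1`, with probability at least
`1 − 1/c` over the Rademacher signs, every row `i` of `HDU` satisfies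
`‖(HDU)_i‖₂ ≤ (1 + √(8 log(cn))) α/√n`. -/
theorem hadamard_row_spreading (s d : ℕ) (α β : ℝ)
    (U : Matrix (Fin (2 ^ s)) (Fin d) ℝ)
    (hα : fnorm U ≤ α) (hβ : ∀ x : Fin d → ℝ, _root_.enorm x ≤ β * _root_.enorm (U.mulVec x))
    (c : ℝ) (hc : 1 < c) :
    (1 : ℝ) - 1 / c ≤
      ((Finset.univ.filter (fun sg : Fin (2 ^ s) → Bool =>
          ∀ i : Fin (2 ^ s),
            _root_.enorm (fun k => ∑ t, ((Real.sqrt (2 ^ s))⁻¹ • Had s) i t * signVec sg t * U t k)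
              ≤ (1 + Real.sqrt (8 * Real.log (c * 2 ^ s))) * α / Real.sqrt (2 ^ s))).card : ℝ)
        / 2 ^ (2 ^ s) := by
  set θ := 1 + √(8 * log (c * 2 ^ s))
  have hθ1 : 1 ≤ θ := le_add_of_nonneg_right (sqrt_nonneg _)
  have hθc : 8 * log (c * ((2 ^ s : ℕ) : ℝ)) ≤ θ ^ 2 := by
    have hL : 0 ≤ 8 * log (c * 2 ^ s) := mul_nonneg (by norm_num) <|
      log_nonneg (one_le_mul_of_one_le_of_one_le hc.le (one_le_pow₀ one_le_two))
    push_cast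
    nlinarith [sq_sqrt hL, sqrt_nonneg (8 * log (c * 2 ^ s))]
  have hcard : (Fintype.card (Fin (2 ^ s) → Bool) : ℝ) = 2 ^ 2 ^ s := by simp
  rw [← hcard]
  set good : Fin (2 ^ s) × Fin d → (Fin (2 ^ s) → Bool) → Prop := fun ik sg =>
    |rademacherSum (fun t => Had s ik.1 t * U t ik.2) sg|
      ≤ θ * _root_.enorm (fun t => Had s ik.1 t * U t ik.2)
  refine one_sub_le_card_filter_div (p := fun sg => ∀ ik, good ik sg)
    (fun sg hsg i => (enorm_Had_row_le (by linarith) fun k => hsg (i, k)).trans (by gcongr)) ?_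
  have hd : d ≤ 2 ^ s := le_of_forall_enorm_le_mul_enorm_mulVec U hβ
  calc _ ≤ ∑ ik, (#{sg | ¬good ik sg} : ℝ) := by exact_mod_cast card_filter_not_forall_le_sum good
    _ ≤ ∑ _ik : Fin (2 ^ s) × Fin d, 2 ^ 2 ^ s / (c * ((2 ^ s : ℕ) : ℝ) ^ 2) :=
        sum_le_sum fun ik _ => by
          simpa only [good, not_le] using
            card_lt_abs_rademacherSum_le_div (Nat.two_pow_pos s) _ hc hθ1 hθc
    _ ≤ (2 ^ s : ℕ) * (2 ^ s : ℕ) * (2 ^ 2 ^ s / (c * ((2 ^ s : ℕ) : ℝ) ^ 2)) := by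
        rw [sum_const, card_univ, Fintype.card_prod, Fintype.card_fin, Fintype.card_fin,
          nsmul_eq_mul, Nat.cast_mul]
        gcongr
    _ = 1 / c * Fintype.card (Fin (2 ^ s) → Bool) := by
        rw [hcard]
        field_simp
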